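/- Let n be an odd positive integer and for q = 1,2,3,4 let α₁q, α₂q, α₃q, α₄q be integers, each quadruple satisfying conditions (2.14), and assume the determinant d₄ of the 4×4 matrix (αₚq) satisfies gcd(d₄,n) = 1. Define M : (ZMod n)⁴ → ℕ by M(i,j,k,ℓ) = n³·Q⁽¹⁾.val + n²·Q⁽²⁾.val + n·Q⁽³⁾.val + Q⁽⁴⁾.val evaluated at (i,j,k,ℓ), where Q⁽q⁾(i,j,k,ℓ) = α₁q·i + α₂q·j + α₃q·k + α₄q·ℓ in ZMod n and .val denotes the canonical representative in {0,...,n−1}. Then M is a four-dimensional pandiagonal magic cube: (a) M is injective and every value of M lies in {0, 1, ..., n⁴−1} (so M is a bijection onto {0,...,n⁴−1}); and (b) for every direction vector d ∈ {−1,0,1}⁴ with d ≠ 0 and every point p ∈ (ZMod n)⁴, the sum over t ∈ ZMod n of M(p + t·d) equals n(n⁴−1)/2. -/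

import Mathlib

/-!
The four digit maps `Q⁽q⁾` form the linear map `v ↦ v ᵥ* A` with `A = (αₚq)` invertible mod `n`,
so `(i, j, k, ℓ) ↦ (Q⁽¹⁾, …, Q⁽⁴⁾)` is a bijection of `(ZMod n)⁴`, and `M` is the base-`n` number
with these digits: this gives injectivity and the range. Along a line `p + t • d` every digit is
affine in `t` with slope `d ⬝ᵥ α_q`; for a nonzero `d ∈ {-1, 0, 1}⁴` this slope is, up to sign,
one of the quantities listed in (2.14), hence a unit. So each digit runs once through `ZMod n`,
contributes `n (n - 1) / 2`, and the line sum is `(n³ + n² + n + 1) n (n - 1) / 2 = n (n⁴ - 1) / 2`.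
-/

/-- Conditions (2.14) on the parameters `α₁, α₂, α₃, α₄` of a linear hypercube modulo
`n`, with `B = α₁ + α₂ + α₃ + α₄`. -/
def Cond214 (n : ℕ) (α₁ α₂ α₃ α₄ : ℤ) : Prop :=
  let a : Fin 4 → ℤ := ![α₁, α₂, α₃, α₄]
  let B : ℤ := α₁ + α₂ + α₃ + α₄
  (∀ m, Int.gcd (a m) n = 1) ∧
  (∀ m m', m ≠ m' → Int.gcd (a m + a m') n = 1) ∧
  (∀ m m', m ≠ m' → Int.gcd (a m - a m') n = 1) ∧
  Int.gcd B n = 1 ∧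
  (∀ m, Int.gcd (B - a m) n = 1) ∧
  (∀ m, Int.gcd (B - 2 * a m) n = 1) ∧
  (∀ m m', m ≠ m' → Int.gcd (B - a m' - 2 * a m) n = 1) ∧
  (∀ m m', m ≠ m' → Int.gcd (B - 2 * a m' - 2 * a m) n = 1)

open Finset Matrix

/-- The coefficient vectors `c` for which `c ⬝ᵥ ![α₁, α₂, α₃, α₄]` is one of the quantities of
(2.14). -/
def IsCond214Coeff (c : Fin 4 → ℤ) : Prop :=
  (∃ m, c = Pi.single m 1) ∨
  (∃ m m', m ≠ m' ∧ c = Pi.single m 1 + Pi.single m' 1) ∨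
  (∃ m m', m ≠ m' ∧ c = Pi.single m 1 - Pi.single m' 1) ∨
  c = 1 ∨
  (∃ m, c = 1 - Pi.single m 1) ∨
  (∃ m, c = 1 - Pi.single m 2) ∨
  (∃ m m', m ≠ m' ∧ c = 1 - Pi.single m' 1 - Pi.single m 2) ∨
  (∃ m m', m ≠ m' ∧ c = 1 - Pi.single m' 2 - Pi.single m 2)

instance : DecidablePred IsCond214Coeff := fun _ => by unfold IsCond214Coeff; infer_instance

theorem isCond214Coeff_or_isCond214Coeff_neg :
    ∀ e₀ ∈ [-1, 0, 1], ∀ e₁ ∈ [-1, 0, 1], ∀ e₂ ∈ [-1, 0, 1], ∀ e₃ ∈ [-1, 0, 1],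
      ![e₀, e₁, e₂, e₃] ≠ 0 →
        IsCond214Coeff ![e₀, e₁, e₂, e₃] ∨ IsCond214Coeff (-![e₀, e₁, e₂, e₃]) := by
  decide

theorem Cond214.gcd_dotProduct_eq_one {n : ℕ} {w : Fin 4 → ℤ}
    (h : Cond214 n (w 0) (w 1) (w 2) (w 3)) {c : Fin 4 → ℤ} (hc : IsCond214Coeff c) :
    Int.gcd (c ⬝ᵥ w) n = 1 := by
  have hw : ![w 0, w 1, w 2, w 3] = w := by ext m; fin_cases m <;> rfl
  have hB : (1 : Fin 4 → ℤ) ⬝ᵥ w = w 0 + w 1 + w 2 + w 3 := by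
    simp [dotProduct, Fin.sum_univ_four]
  obtain ⟨h₁, h₂, h₃, h₄, h₅, h₆, h₇, h₈⟩ := h
  simp only [hw] at *
  rcases hc with ⟨m, rfl⟩ | ⟨m, m', hm, rfl⟩ | ⟨m, m', hm, rfl⟩ | rfl | ⟨m, rfl⟩ | ⟨m, rfl⟩ |
    ⟨m, m', hm, rfl⟩ | ⟨m, m', hm, rfl⟩ <;>
  simp only [add_dotProduct, sub_dotProduct, single_dotProduct, one_mul, hB]
  exacts [h₁ m, h₂ m m' hm, h₃ m m' hm, h₄, h₅ m, h₆ m, h₇ m m' hm, h₈ m m' hm]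

theorem Cond214.gcd_signVector_dotProduct_eq_one {n : ℕ} {w : Fin 4 → ℤ}
    (h : Cond214 n (w 0) (w 1) (w 2) (w 3)) {e : Fin 4 → ℤ} (he : ∀ m, e m ∈ [-1, 0, 1])
    (hne : e ≠ 0) : Int.gcd (e ⬝ᵥ w) n = 1 := by
  have he' : ![e 0, e 1, e 2, e 3] = e := by ext m; fin_cases m <;> rfl
  rcases he' ▸ isCond214Coeff_or_isCond214Coeff_neg _ (he 0) _ (he 1) _ (he 2) _ (he 3)
    (he'.symm ▸ hne) with hc | hc
  · exact h.gcd_dotProduct_eq_one hc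
  · simpa [neg_dotProduct] using h.gcd_dotProduct_eq_one hc

theorem ZMod.isUnit_intCast_of_gcd_eq_one {n : ℕ} {x : ℤ} (h : Int.gcd x n = 1) :
    IsUnit (x : ZMod n) :=
  (ZMod.unitOfIsCoprime x (Int.isCoprime_iff_gcd_eq_one.2 h)).isUnit

theorem ZMod.sum_val_add_mul_of_isUnit {n : ℕ} [NeZero n] (b c : ZMod n) (hc : IsUnit c) :
    ∑ t : ZMod n, (b + t * c).val = ∑ z : ZMod n, z.val := by
  obtain ⟨u, rfl⟩ := hc
  exact Fintype.sum_equiv ((Units.mulRight u).trans (Equiv.addLeft b)) _ _ fun _ => rfl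

theorem ZMod.sum_val_mul_two (n : ℕ) [NeZero n] : (∑ z : ZMod n, z.val) * 2 = n * (n - 1) := by
  obtain ⟨k, rfl⟩ := Nat.exists_eq_succ_of_ne_zero (NeZero.ne n)
  rw [← sum_range_id_mul_two, ← Fin.sum_univ_eq_sum_range]
  rfl

theorem Nat.eq_and_eq_of_add_mul_eq_add_mul {n a b x y : ℕ} (ha : a < n) (hb : b < n)
    (h : a + n * x = b + n * y) : a = b ∧ x = y := by
  have hab : a = b := by
    simpa [Nat.mod_eq_of_lt ha, Nat.mod_eq_of_lt hb] using congrArg (· % n) h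
  subst hab
  exact ⟨rfl, Nat.eq_of_mul_eq_mul_left (a.zero_le.trans_lt ha) (Nat.add_left_cancel h)⟩

def ofDigits4 (n : ℕ) (x : Fin 4 → ZMod n) : ℕ :=
  n ^ 3 * (x 0).val + n ^ 2 * (x 1).val + n * (x 2).val + (x 3).val

theorem ofDigits4_eq (n : ℕ) (x : Fin 4 → ZMod n) :
    ofDigits4 n x = (x 3).val + n * ((x 2).val + n * ((x 1).val + n * (x 0).val)) := by
  unfold ofDigits4; ring

theorem ofDigits4_lt {n : ℕ} [NeZero n] (x : Fin 4 → ZMod n) : ofDigits4 n x < n ^ 4 := by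
  have hx (q : Fin 4) : (x q).val < n := ZMod.val_lt _
  rw [ofDigits4_eq]
  refine (Nat.add_mul_lt_mul_of_lt_of_lt (hx 3) (Nat.add_mul_lt_mul_of_lt_of_lt (hx 2)
    (Nat.add_mul_lt_mul_of_lt_of_lt (hx 1) (hx 0)))).trans_eq ?_
  ring

theorem ofDigits4_injective (n : ℕ) [NeZero n] : Function.Injective (ofDigits4 n) := by
  intro x y h
  have hx (q : Fin 4) : (x q).val < n := ZMod.val_lt _
  have hy (q : Fin 4) : (y q).val < n := ZMod.val_lt _
  rw [ofDigits4_eq, ofDigits4_eq] at h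
  obtain ⟨h₃, h⟩ := Nat.eq_and_eq_of_add_mul_eq_add_mul (hx 3) (hy 3) h
  obtain ⟨h₂, h⟩ := Nat.eq_and_eq_of_add_mul_eq_add_mul (hx 2) (hy 2) h
  obtain ⟨h₁, h₀⟩ := Nat.eq_and_eq_of_add_mul_eq_add_mul (hx 1) (hy 1) h
  ext q
  fin_cases q <;> apply ZMod.val_injective n <;> assumption

theorem sum_ofDigits4_add_smul {n : ℕ} [NeZero n] (b c : Fin 4 → ZMod n)
    (hc : ∀ q, IsUnit (c q)) : ∑ t : ZMod n, ofDigits4 n (b + t • c) = n * (n ^ 4 - 1) / 2 := by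
  have hS (q : Fin 4) : ∑ t : ZMod n, ((b + t • c) q).val = ∑ z : ZMod n, z.val :=
    ZMod.sum_val_add_mul_of_isUnit (b q) (c q) (hc q)
  have hn : 1 ≤ n := Nat.one_le_iff_ne_zero.2 (NeZero.ne n)
  have hfactor : n * (n ^ 4 - 1) = (n ^ 3 + n ^ 2 + n + 1) * (n * (n - 1)) := by
    zify [hn, Nat.one_le_pow 4 n hn]; ring
  simp only [ofDigits4, sum_add_distrib, ← mul_sum, hS]
  rw [hfactor, ← ZMod.sum_val_mul_two, ← mul_assoc, Nat.mul_div_cancel _ two_pos]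
  ring

theorem Int.exists_cast_eq_of_mem_neg_one_zero_one {R : Type*} [Ring R] {d : R}
    (hd : d ∈ ({-1, 0, 1} : Set R)) : ∃ e ∈ [(-1 : ℤ), 0, 1], (e : R) = d := by
  rcases hd with rfl | rfl | rfl
  exacts [⟨-1, by simp, by simp⟩, ⟨0, by simp, by simp⟩, ⟨1, by simp, by simp⟩]

theorem Int.exists_signVector_cast_eq {ι R : Type*} [Ring R] {d : ι → R}
    (hd : ∀ m, d m ∈ ({-1, 0, 1} : Set R)) (hne : d ≠ 0) :
    ∃ e : ι → ℤ, (∀ m, e m ∈ [-1, 0, 1]) ∧ e ≠ 0 ∧ (fun m => (e m : R)) = d := by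
  choose e he hed using fun m => Int.exists_cast_eq_of_mem_neg_one_zero_one (hd m)
  refine ⟨e, he, ?_, funext hed⟩
  rintro rfl
  exact hne (funext fun m => by simp [← hed m])

theorem Cond214.isUnit_vecMul_intCast {n : ℕ} {α : Matrix (Fin 4) (Fin 4) ℤ}
    (hc : ∀ q, Cond214 n (α 0 q) (α 1 q) (α 2 q) (α 3 q)) {e : Fin 4 → ℤ}
    (he : ∀ m, e m ∈ [-1, 0, 1]) (hne : e ≠ 0) (q : Fin 4) :
    IsUnit (((fun m => (e m : ZMod n)) ᵥ* α.map (↑)) q) := by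
  have hcast := (Int.castRingHom (ZMod n)).map_vecMul α e q
  simp only [Int.coe_castRingHom, Function.comp_def] at hcast
  rw [← hcast]
  exact ZMod.isUnit_intCast_of_gcd_eq_one <|
    (hc q).gcd_signVector_dotProduct_eq_one (w := fun p => α p q) he hne

theorem magic_pandiagonal_hypercube_general
    (n : ℕ) [NeZero n] (α : Fin 4 → Fin 4 → ℤ)
    (hc : ∀ q : Fin 4, Cond214 n (α 0 q) (α 1 q) (α 2 q) (α 3 q))
    (hdet : Int.gcd (Matrix.det (Matrix.of fun p q : Fin 4 => α p q)) n = 1)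
    (Q : Fin 4 → ZMod n → ZMod n → ZMod n → ZMod n → ZMod n)
    (hQ : ∀ q i j k l, Q q i j k l =
      (α 0 q : ZMod n) * i + (α 1 q : ZMod n) * j + (α 2 q : ZMod n) * k +
        (α 3 q : ZMod n) * l)
    (M : ZMod n → ZMod n → ZMod n → ZMod n → ℕ)
    (hM : ∀ i j k l, M i j k l =
      n ^ 3 * (Q 0 i j k l).val + n ^ 2 * (Q 1 i j k l).val +
        n * (Q 2 i j k l).val + (Q 3 i j k l).val) :
    (Function.Injective
      fun v : ZMod n × ZMod n × ZMod n × ZMod n => M v.1 v.2.1 v.2.2.1 v.2.2.2) ∧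
    (∀ i j k l : ZMod n, M i j k l < n ^ 4) ∧
    (∀ d₁ d₂ d₃ d₄ : ZMod n,
      d₁ ∈ ({-1, 0, 1} : Set (ZMod n)) →
      d₂ ∈ ({-1, 0, 1} : Set (ZMod n)) →
      d₃ ∈ ({-1, 0, 1} : Set (ZMod n)) →
      d₄ ∈ ({-1, 0, 1} : Set (ZMod n)) →
      ¬ (d₁ = 0 ∧ d₂ = 0 ∧ d₃ = 0 ∧ d₄ = 0) →
      ∀ p₁ p₂ p₃ p₄ : ZMod n,
        ∑ t : ZMod n, M (p₁ + t * d₁) (p₂ + t * d₂) (p₃ + t * d₃) (p₄ + t * d₄) =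
          n * (n ^ 4 - 1) / 2) := by
  set A : Matrix (Fin 4) (Fin 4) (ZMod n) := (Matrix.of α).map (↑)
  have hMA (i j k l : ZMod n) : M i j k l = ofDigits4 n (![i, j, k, l] ᵥ* A) := by
    simp [hM, hQ, ofDigits4, A, vecMul, dotProduct, Fin.sum_univ_four, mul_comm]
  have hA : IsUnit A := by
    rw [isUnit_iff_isUnit_det, ← Int.cast_det]
    exact ZMod.isUnit_intCast_of_gcd_eq_one hdet
  refine ⟨?_, fun i j k l => hMA i j k l ▸ ofDigits4_lt _, ?_⟩
  · rintro ⟨i, j, k, l⟩ ⟨i', j', k', l'⟩ h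
    have hv := vecMul_injective_of_isUnit hA (ofDigits4_injective n (by simpa only [hMA] using h))
    simp only [Prod.mk.injEq]
    exact ⟨congrFun hv 0, congrFun hv 1, congrFun hv 2, congrFun hv 3⟩
  · intro d₁ d₂ d₃ d₄ hd₁ hd₂ hd₃ hd₄ hd p₁ p₂ p₃ p₄
    obtain ⟨e, he, hne, hed⟩ := Int.exists_signVector_cast_eq (d := ![d₁, d₂, d₃, d₄])
      (fun m => by fin_cases m <;> assumption) (by simpa [funext_iff, Fin.forall_fin_succ] using hd)
    have hline (t : ZMod n) : ![p₁ + t * d₁, p₂ + t * d₂, p₃ + t * d₃, p₄ + t * d₄] =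
        ![p₁, p₂, p₃, p₄] + t • ![d₁, d₂, d₃, d₄] := by
      ext q; fin_cases q <;> simp
    simp only [hMA, hline, add_vecMul, smul_vecMul]
    exact sum_ofDigits4_add_smul _ _ (hed ▸ Cond214.isUnit_vecMul_intCast hc he hne)

/-- **Theorem 3.3.** For odd `n`, four quadruples `(α₁q,α₂q,α₃q,α₄q)`
each satisfying conditions (2.14) with determinant coprime to `n`, the array
`M = n³·Q⁽¹⁾.val + n²·Q⁽²⁾.val + n·Q⁽³⁾.val + Q⁽⁴⁾.val` (with
`Q⁽q⁾(i,j,k,ℓ) = α₁q·i + α₂q·j + α₃q·k + α₄q·ℓ`) is a four-dimensional pandiagonal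
magic cube: a bijection onto `{0, …, n⁴-1}` in which every line with direction a
nonzero vector in `{-1,0,1}⁴` sums to `n(n⁴-1)/2`. -/
theorem magic_pandiagonal_hypercube
    (n : ℕ) (hodd : Odd n) [NeZero n] (α : Fin 4 → Fin 4 → ℤ)
    (hc : ∀ q : Fin 4, Cond214 n (α 0 q) (α 1 q) (α 2 q) (α 3 q))
    (hdet : Int.gcd (Matrix.det (Matrix.of fun p q : Fin 4 => α p q)) n = 1)
    (Q : Fin 4 → ZMod n → ZMod n → ZMod n → ZMod n → ZMod n)
    (hQ : ∀ q i j k l, Q q i j k l =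
      (α 0 q : ZMod n) * i + (α 1 q : ZMod n) * j + (α 2 q : ZMod n) * k +
        (α 3 q : ZMod n) * l)
    (M : ZMod n → ZMod n → ZMod n → ZMod n → ℕ)
    (hM : ∀ i j k l, M i j k l =
      n ^ 3 * (Q 0 i j k l).val + n ^ 2 * (Q 1 i j k l).val +
        n * (Q 2 i j k l).val + (Q 3 i j k l).val) :
    (Function.Injective
      fun v : ZMod n × ZMod n × ZMod n × ZMod n => M v.1 v.2.1 v.2.2.1 v.2.2.2) ∧
    (∀ i j k l : ZMod n, M i j k l < n ^ 4) ∧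
    (∀ d₁ d₂ d₃ d₄ : ZMod n,
      d₁ ∈ ({-1, 0, 1} : Set (ZMod n)) →
      d₂ ∈ ({-1, 0, 1} : Set (ZMod n)) →
      d₃ ∈ ({-1, 0, 1} : Set (ZMod n)) →
      d₄ ∈ ({-1, 0, 1} : Set (ZMod n)) →
      ¬ (d₁ = 0 ∧ d₂ = 0 ∧ d₃ = 0 ∧ d₄ = 0) →
      ∀ p₁ p₂ p₃ p₄ : ZMod n,
        ∑ t : ZMod n, M (p₁ + t * d₁) (p₂ + t * d₂) (p₃ + t * d₃) (p₄ + t * d₄) =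
          n * (n ^ 4 - 1) / 2) :=
  magic_pandiagonal_hypercube_general n α hc hdet Q hQ M hM
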